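/- Let (X,d) be a metric space and let ν be a Borel measure on X whose support is all of X and which is finite on bounded sets, satisfying the Bishop–Gromov inequality with parameters (K,N), where K ≤ 0 and 1 < N < ∞. Let ε > 0 and let 𝒩 ⊆ X be an ε-separated set. Then for every x ∈ X and every r > 0, the set 𝒩 ∩ B(x,r) is finite, of cardinality at most (∫₀^{2r+ε/2} S_K^N(t) dt) / (∫₀^{ε/2} S_K^N(t) dt). -/

import Mathlib

open MeasureTheory Metric

/-- The model volume density `S_K^N` for `K ≤ 0`, `1 < N < ∞`. -/
noncomputable def SKN (K N t : ℝ) : ℝ :=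
  if K = 0 then t ^ (N - 1)
  else Real.sinh (Real.sqrt (|K| / (N - 1)) * t) ^ (N - 1)

/-- A Borel measure `ν` of full support satisfies the Bishop–Gromov inequality with
parameters `(K, N)` if for every `x` the function
`r ↦ ν(B(x,r)) / ∫₀^r S_K^N(t) dt` is nonincreasing on `(0, ∞)`. -/
def BishopGromov {X : Type*} [MetricSpace X] [MeasurableSpace X]
    (ν : Measure X) (K N : ℝ) : Prop :=
  ∀ x : X, AntitoneOn
    (fun r => (ν (ball x r)).toReal / ∫ t in (0:ℝ)..r, SKN K N t) (Set.Ioi 0)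

/-- A subset `𝒩` of a metric space is `ε`-separated if distinct points of `𝒩` are at
distance at least `ε`. -/
def IsSeparated {X : Type*} [MetricSpace X] (𝒩 : Set X) (ε : ℝ) : Prop :=
  ∀ p ∈ 𝒩, ∀ q ∈ 𝒩, p ≠ q → ε ≤ dist p q

/-! The balls of radius `ε/2` about the points of `𝒩 ∩ B(x,r)` are disjoint and lie in
`B(x, r + ε/2)`. For each such point `p`, `B(x, r + ε/2) ⊆ B(p, 2r + ε/2)`, so Bishop–Gromov
gives `ν(B(p, ε/2)) ≥ ν(B(x, r + ε/2)) · c / C` with `c, C` the model volumes of radii `ε/2` and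
`2r + ε/2`; comparing the total measure bounds the number of points by `C / c`. -/

theorem Set.finite_and_ncard_le_of_forall_finset_card_le {α : Type*} {s : Set α} {B : ℝ}
    (h : ∀ F : Finset α, ↑F ⊆ s → (F.card : ℝ) ≤ B) : s.Finite ∧ (s.ncard : ℝ) ≤ B := by
  have hs : s.Finite := by
    by_contra hinf
    obtain ⟨F, hFs, hF⟩ := Set.Infinite.exists_subset_card_eq hinf (⌈B⌉₊ + 1)
    have := h F hFs
    rw [hF] at this
    push_cast at this
    linarith [Nat.le_ceil B]
  refine ⟨hs, ?_⟩
  rw [Set.ncard_eq_toFinset_card _ hs]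
  exact h hs.toFinset (by simp)

theorem IsSeparated.pairwiseDisjoint_ball {X : Type*} [MetricSpace X] {𝒩 : Set X} {ε : ℝ}
    (h : IsSeparated 𝒩 ε) : 𝒩.PairwiseDisjoint (fun p => ball p (ε / 2)) :=
  fun p hp q hq hpq => ball_disjoint_ball (by linarith [h p hp q hq hpq])

theorem card_mul_le_measure_of_pairwiseDisjoint_ball {X : Type*} [MetricSpace X]
    [MeasurableSpace X] [OpensMeasurableSpace X] {ν : Measure X} {F : Finset X} {ρ m : ℝ}
    {S : Set X} (hS : ν S ≠ ⊤) (hdisj : (F : Set X).PairwiseDisjoint (fun p => ball p ρ))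
    (hsub : ∀ p ∈ F, ball p ρ ⊆ S) (hm : ∀ p ∈ F, m ≤ (ν (ball p ρ)).toReal) :
    F.card * m ≤ (ν S).toReal := by
  have hsum : ∑ p ∈ F, ν (ball p ρ) ≤ ν S := by
    rw [← measure_biUnion_finset hdisj fun p _ => measurableSet_ball]
    exact measure_mono (Set.iUnion₂_subset hsub)
  have hfin : ∀ p ∈ F, ν (ball p ρ) ≠ ⊤ :=
    fun p hp => ne_top_of_le_ne_top hS (measure_mono (hsub p hp))
  calc (F.card : ℝ) * m = ∑ _p ∈ F, m := by rw [Finset.sum_const, nsmul_eq_mul]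
    _ ≤ ∑ p ∈ F, (ν (ball p ρ)).toReal := Finset.sum_le_sum hm
    _ = (∑ p ∈ F, ν (ball p ρ)).toReal := (ENNReal.toReal_sum hfin).symm
    _ ≤ (ν S).toReal := ENNReal.toReal_mono hS hsum

theorem continuous_SKN (K : ℝ) {N : ℝ} (hN : 1 < N) : Continuous (SKN K N) := by
  have hN1 : 0 ≤ N - 1 := by linarith
  unfold SKN
  split_ifs
  · exact continuous_id.rpow_const fun _ => Or.inr hN1
  · exact (Real.continuous_sinh.comp (continuous_const.mul continuous_id)).rpow_const
      fun _ => Or.inr hN1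

theorem SKN_pos {K N : ℝ} (hN : 1 < N) {t : ℝ} (ht : 0 < t) : 0 < SKN K N t := by
  unfold SKN
  split_ifs with hK
  · exact Real.rpow_pos_of_pos ht _
  · refine Real.rpow_pos_of_pos (Real.sinh_pos_iff.2 (mul_pos ?_ ht)) _
    exact Real.sqrt_pos.2 (div_pos (abs_pos.2 hK) (by linarith))

theorem integral_SKN_pos {K N : ℝ} (hN : 1 < N) {b : ℝ} (hb : 0 < b) :
    0 < ∫ t in (0:ℝ)..b, SKN K N t :=
  intervalIntegral.intervalIntegral_pos_of_pos_on
    ((continuous_SKN K hN).intervalIntegrable 0 b) (fun _ ht => SKN_pos hN ht.1) hb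

theorem BishopGromov.measure_ball_mul_le {X : Type*} [MetricSpace X] [MeasurableSpace X]
    {ν : Measure X} {K N : ℝ} (hBG : BishopGromov ν K N) (hN : 1 < N) (p : X) {ρ R : ℝ}
    (hρ : 0 < ρ) (hρR : ρ ≤ R) :
    (ν (ball p R)).toReal * ∫ t in (0:ℝ)..ρ, SKN K N t ≤
      (ν (ball p ρ)).toReal * ∫ t in (0:ℝ)..R, SKN K N t :=
  (div_le_div_iff₀ (integral_SKN_pos hN (hρ.trans_le hρR)) (integral_SKN_pos hN hρ)).1
    (hBG p hρ (hρ.trans_le hρR) hρR)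

theorem stmt_6_general {X : Type*} [MetricSpace X] [MeasurableSpace X] [BorelSpace X]
    (ν : Measure X)
    (hfull : ∀ x : X, ∀ r > (0:ℝ), 0 < ν (ball x r))
    (hbdd : ∀ s : Set X, Bornology.IsBounded s → ν s < ⊤)
    (K N : ℝ) (hN : 1 < N)
    (hBG : BishopGromov ν K N)
    (ε : ℝ) (hε : 0 < ε) (𝒩 : Set X) (hsep : IsSeparated 𝒩 ε)
    (x : X) (r : ℝ) (hr : 0 < r) :
    (𝒩 ∩ ball x r).Finite ∧
      ((𝒩 ∩ ball x r).ncard : ℝ) ≤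
        (∫ t in (0:ℝ)..(2 * r + ε / 2), SKN K N t) /
          ∫ t in (0:ℝ)..(ε / 2), SKN K N t := by
  set c := ∫ t in (0:ℝ)..(ε / 2), SKN K N t
  set C := ∫ t in (0:ℝ)..(2 * r + ε / 2), SKN K N t
  have hc : 0 < c := integral_SKN_pos hN (by linarith)
  have hC : 0 < C := integral_SKN_pos hN (by linarith)
  have hfin : ν (ball x (r + ε / 2)) ≠ ⊤ := (hbdd _ isBounded_ball).ne
  set V := (ν (ball x (r + ε / 2))).toReal
  have hV : 0 < V := ENNReal.toReal_pos (hfull x _ (by linarith)).ne' hfin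
  have hlow : ∀ p ∈ 𝒩 ∩ ball x r, V * c / C ≤ (ν (ball p (ε / 2))).toReal := by
    rintro p ⟨-, hpx⟩
    have hsub : ball x (r + ε / 2) ⊆ ball p (2 * r + ε / 2) :=
      ball_subset_ball' (by rw [dist_comm]; linarith [mem_ball.1 hpx])
    have hVp : V ≤ (ν (ball p (2 * r + ε / 2))).toReal :=
      ENNReal.toReal_mono (hbdd _ isBounded_ball).ne (measure_mono hsub)
    rw [div_le_iff₀ hC]
    exact (mul_le_mul_of_nonneg_right hVp hc.le).trans
      (hBG.measure_ball_mul_le hN p (by linarith) (by linarith))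
  refine Set.finite_and_ncard_le_of_forall_finset_card_le fun F hF => ?_
  have hpack := card_mul_le_measure_of_pairwiseDisjoint_ball hfin
    (hsep.pairwiseDisjoint_ball.subset fun p hp => (hF hp).1)
    (fun p hp => ball_subset_ball' (by linarith [mem_ball.1 (hF hp).2]))
    (fun p hp => hlow p (hF hp))
  rw [le_div_iff₀ hc]
  rw [← mul_div_assoc, div_le_iff₀ hC] at hpack
  nlinarith

theorem stmt_6 {X : Type*} [MetricSpace X] [MeasurableSpace X] [BorelSpace X]
    (ν : Measure X)
    (hfull : ∀ x : X, ∀ r > (0:ℝ), 0 < ν (ball x r))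
    (hbdd : ∀ s : Set X, Bornology.IsBounded s → ν s < ⊤)
    (K N : ℝ) (hK : K ≤ 0) (hN : 1 < N)
    (hBG : BishopGromov ν K N)
    (ε : ℝ) (hε : 0 < ε) (𝒩 : Set X) (hsep : IsSeparated 𝒩 ε)
    (x : X) (r : ℝ) (hr : 0 < r) :
    (𝒩 ∩ ball x r).Finite ∧
      ((𝒩 ∩ ball x r).ncard : ℝ) ≤
        (∫ t in (0:ℝ)..(2 * r + ε / 2), SKN K N t) /
          ∫ t in (0:ℝ)..(ε / 2), SKN K N t :=
  stmt_6_general ν hfull hbdd K N hN hBG ε hε 𝒩 hsep x r hr
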